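/- Assume that the advances are bounded, i.e. for each 1 ≤ i ≤ m there exists μ_i > 0 with σ_i(n) − n ≤ μ_i for all n ≥ 1, and that for each k = 1, …, m, liminf_{n→∞} Σ_{i=1}^m Σ_{j=n+1}^{σ_k(n)} p_i(j) > 1/e. Then every solution of (E_A) oscillates. -/

import Mathlib

/-!
If a solution `x` were eventually positive, then whenever `c x(n) ≤ x(σ_k(n))` for all large `n`
and all `k`, the equation gives `x(j - 1) ≤ (1 - c Q(j)) x(j) ≤ e^{-c Q(j)} x(j)` with
`Q = ∑ᵢ pᵢ`; chaining this over a window `n < j ≤ σ_k(n)` of weight at least `α > 1/e` improves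
`c` to `e^{α c}`. Starting from `c = 0` the iterates grow like `(e α)^t`, yet positivity of `x`
keeps `c Q(j) < 1` for each of them, so `Q` vanishes on every late window, contradicting its weight.
-/

open Filter Finset Real

lemma exists_eventually_forall_lt_of_lt_liminf {ι : Type*} [Fintype ι] {f : ι → ℕ → ℝ}
    {a : ℝ} (hf : ∀ k, IsBoundedUnder (· ≥ ·) atTop (f k))
    (h : ∀ k, a < liminf (f k) atTop) :
    ∃ α, a < α ∧ ∀ᶠ n in atTop, ∀ k, α < f k n := by
  classical
  obtain ⟨α, hα, hαL⟩ := Order.exists_between_finsets {a} (univ.image fun k => liminf (f k) atTop)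
    (by simpa using h)
  simp only [mem_singleton, forall_eq, mem_image, mem_univ, true_and, forall_exists_index,
    forall_apply_eq_imp_iff] at hα hαL
  exact ⟨α, hα, eventually_all.2 fun k => eventually_lt_of_lt_liminf (hαL k) (hf k)⟩

lemma le_mul_exp_neg_sum_Icc {y q : ℕ → ℝ} {a b : ℕ} (hab : a ≤ b)
    (hy : ∀ j ∈ Icc (a + 1) b, 0 ≤ y j)
    (hstep : ∀ j ∈ Icc (a + 1) b, y (j - 1) ≤ y j * exp (-q j)) :
    y a ≤ y b * exp (-∑ j ∈ Icc (a + 1) b, q j) := by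
  induction b, hab using Nat.le_induction with
  | base => simp
  | succ b hab ih =>
    have hmem : b + 1 ∈ Icc (a + 1) (b + 1) := mem_Icc.2 ⟨by omega, le_rfl⟩
    have hsub : Icc (a + 1) b ⊆ Icc (a + 1) (b + 1) := Icc_subset_Icc_right (by omega)
    have hlast := hstep _ hmem
    rw [Nat.add_sub_cancel] at hlast
    calc y a ≤ y b * exp (-∑ j ∈ Icc (a + 1) b, q j) :=
          ih (fun j hj => hy j (hsub hj)) (fun j hj => hstep j (hsub hj))
      _ ≤ y (b + 1) * exp (-q (b + 1)) * exp (-∑ j ∈ Icc (a + 1) b, q j) := by gcongr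
      _ = y (b + 1) * exp (-∑ j ∈ Icc (a + 1) (b + 1), q j) := by
        rw [sum_Icc_succ_top (by omega), mul_assoc, ← exp_add]
        ring_nf

noncomputable def boost (α : ℝ) : ℕ → ℝ
  | 0 => 0
  | t + 1 => exp (α * boost α t)

lemma boost_nonneg (α : ℝ) : ∀ t, 0 ≤ boost α t
  | 0 => le_rfl
  | _ + 1 => (exp_pos _).le

lemma pow_le_boost_succ {α : ℝ} (hα : 0 ≤ α) : ∀ t, (exp 1 * α) ^ t ≤ boost α (t + 1)
  | 0 => by simp [boost]
  | t + 1 => calc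
      (exp 1 * α) ^ (t + 1) ≤ exp 1 * (α * boost α (t + 1)) := by
        rw [pow_succ, mul_comm, mul_assoc]
        gcongr
        exact pow_le_boost_succ hα t
      _ ≤ boost α (t + 2) := exp_one_mul_le_exp

lemma tendsto_boost_atTop {α : ℝ} (hα : 1 / exp 1 < α) : Tendsto (boost α) atTop atTop := by
  have hα0 : 0 ≤ α := le_trans (by positivity) hα.le
  have heα : 1 < exp 1 * α := by rwa [div_lt_iff₀' (exp_pos 1)] at hα
  rw [← tendsto_add_atTop_iff_nat 1]
  exact tendsto_atTop_mono (pow_le_boost_succ hα0) (tendsto_pow_atTop_atTop_of_one_lt heα)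

section AdvancedEquation

variable {ι : Type*} [Fintype ι] {p : ι → ℕ → ℝ} {σ : ι → ℕ → ℕ} {x : ℕ → ℝ}

def IsAdvancedSolution (p : ι → ℕ → ℝ) (σ : ι → ℕ → ℕ) (x : ℕ → ℝ) : Prop :=
  ∀ n, 1 ≤ n → x n - x (n - 1) = ∑ i, p i n * x (σ i n)

lemma IsAdvancedSolution.neg (hx : IsAdvancedSolution p σ x) : IsAdvancedSolution p σ (-x) := by
  intro n hn
  simp only [Pi.neg_apply, mul_neg, sum_neg_distrib, ← hx n hn]
  ring

variable (hp : ∀ i n, 0 ≤ p i n) (hx : IsAdvancedSolution p σ x)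
include hp hx

lemma IsAdvancedSolution.sub_one_le_mul_one_sub {N : ℕ} {c : ℝ}
    (hc : ∀ n ≥ N, ∀ k, c * x n ≤ x (σ k n)) {j : ℕ} (hjN : N ≤ j) (hj : 1 ≤ j) :
    x (j - 1) ≤ x j * (1 - c * ∑ i, p i j) := by
  have hsum : c * (∑ i, p i j) * x j ≤ ∑ i, p i j * x (σ i j) := by
    rw [mul_comm c, sum_mul, sum_mul]
    exact sum_le_sum fun i _ => by
      rw [mul_assoc]; exact mul_le_mul_of_nonneg_left (hc j hjN i) (hp i j)
  linarith [hx j hj]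

lemma IsAdvancedSolution.mul_sum_lt_one {N : ℕ} (hpos : ∀ n ≥ N, 0 < x n) {c : ℝ}
    (hc : ∀ n ≥ N, ∀ k, c * x n ≤ x (σ k n)) {j : ℕ} (hj : N + 1 ≤ j) :
    c * ∑ i, p i j < 1 := by
  have h := hx.sub_one_le_mul_one_sub hp hc (j := j) (by omega) (by omega)
  have hfac := pos_of_mul_pos_right ((hpos (j - 1) (by omega)).trans_le h) (hpos j (by omega)).le
  linarith

lemma IsAdvancedSolution.exp_mul_le_of_mul_le {N : ℕ} (hN : 1 ≤ N) (hpos : ∀ n ≥ N, 0 < x n)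
    (hσ : ∀ i n, 1 ≤ n → n + 1 ≤ σ i n) {α : ℝ}
    (hwin : ∀ n ≥ N, ∀ k, α ≤ ∑ j ∈ Icc (n + 1) (σ k n), ∑ i, p i j)
    {c : ℝ} (hc0 : 0 ≤ c) (hc : ∀ n ≥ N, ∀ k, c * x n ≤ x (σ k n)) :
    ∀ n ≥ N, ∀ k, exp (α * c) * x n ≤ x (σ k n) := by
  intro n hn k
  have hchain : x n ≤ x (σ k n) * exp (-∑ j ∈ Icc (n + 1) (σ k n), c * ∑ i, p i j) := by
    refine le_mul_exp_neg_sum_Icc (by linarith [hσ k n (by omega)]) ?_ ?_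
    · intro j hj
      exact (hpos j (by linarith [(mem_Icc.1 hj).1])).le
    · intro j hj
      have hj1 := (mem_Icc.1 hj).1
      calc x (j - 1) ≤ x j * (1 - c * ∑ i, p i j) := hx.sub_one_le_mul_one_sub hp hc (by omega) (by omega)
        _ ≤ x j * exp (-(c * ∑ i, p i j)) := by
          gcongr
          · exact (hpos j (by omega)).le
          · linarith [add_one_le_exp (-(c * ∑ i, p i j))]
  have hσpos : 0 ≤ x (σ k n) := (hpos _ (by linarith [hσ k n (by omega)])).le
  rw [← mul_sum] at hchain
  have hexp : exp (-(c * ∑ j ∈ Icc (n + 1) (σ k n), ∑ i, p i j)) ≤ exp (-(α * c)) :=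
    exp_le_exp.2 (by nlinarith [hwin n hn k])
  calc exp (α * c) * x n ≤ exp (α * c) * (x (σ k n) * exp (-(α * c))) := by
        gcongr
        exact hchain.trans (by gcongr)
    _ = x (σ k n) := by rw [exp_neg]; field_simp

lemma IsAdvancedSolution.not_eventually_pos [Nonempty ι] (hσ : ∀ i n, 1 ≤ n → n + 1 ≤ σ i n)
    {α : ℝ} (hα : 1 / exp 1 < α)
    (hwin : ∀ᶠ n in atTop, ∀ k, α ≤ ∑ j ∈ Icc (n + 1) (σ k n), ∑ i, p i j) :
    ¬ ∀ᶠ n in atTop, 0 < x n := by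
  intro hpos
  obtain ⟨N, hN⟩ := eventually_atTop.1 (hpos.and (hwin.and (eventually_ge_atTop 1)))
  have hposN : ∀ n ≥ N, 0 < x n := fun n hn => (hN n hn).1
  have hwinN := fun n hn => (hN n hn).2.1
  have hN1 : 1 ≤ N := (hN N le_rfl).2.2
  have hboost : ∀ t, ∀ n ≥ N, ∀ k, boost α t * x n ≤ x (σ k n) := by
    intro t
    induction t with
    | zero =>
      intro n hn k
      simpa [boost] using (hposN _ (by linarith [hσ k n (by omega)])).le
    | succ t ih => exact hx.exp_mul_le_of_mul_le hp hN1 hposN hσ hwinN (boost_nonneg α t) ih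
  obtain ⟨k⟩ := ‹Nonempty ι›
  have hα0 : 0 < α := (by positivity : (0 : ℝ) < 1 / exp 1).trans hα
  obtain ⟨j, hj, hQj⟩ : ∃ j ∈ Icc (N + 1) (σ k N), 0 < ∑ i, p i j :=
    exists_lt_of_sum_lt (by simpa using hα0.trans_le (hwinN N le_rfl k))
  obtain ⟨t, ht⟩ := ((tendsto_boost_atTop hα).eventually_gt_atTop (1 / ∑ i, p i j)).exists
  have hlt := hx.mul_sum_lt_one hp hposN (hboost t) (mem_Icc.1 hj).1
  rw [div_lt_iff₀ hQj] at ht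
  linarith

end AdvancedEquation

theorem stmt_12_general {m : ℕ} (hm : 0 < m) (p : Fin m → ℕ → ℝ) (σ : Fin m → ℕ → ℕ)
    (hp : ∀ i : Fin m, ∀ n : ℕ, 0 ≤ p i n)
    (hσ : ∀ i : Fin m, ∀ n : ℕ, 1 ≤ n → n + 1 ≤ σ i n)
    (hcond : ∀ k : Fin m,
      1 / Real.exp 1 <
        Filter.liminf (fun n : ℕ => ∑ i : Fin m, ∑ j ∈ Finset.Icc (n + 1) (σ k n), p i j)
          Filter.atTop)
    (x : ℕ → ℝ)
    (hxeq : ∀ n : ℕ, 1 ≤ n → x n - x (n - 1) - ∑ i : Fin m, p i n * x (σ i n) = 0) :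
    (¬ ∃ N : ℕ, ∀ n ≥ N, 0 < x n) ∧ (¬ ∃ N : ℕ, ∀ n ≥ N, x n < 0) := by
  have : Nonempty (Fin m) := ⟨⟨0, hm⟩⟩
  have hx : IsAdvancedSolution p σ x := fun n hn => sub_eq_zero.1 (hxeq n hn)
  obtain ⟨α, hα, hwin⟩ := exists_eventually_forall_lt_of_lt_liminf
    (fun k => isBoundedUnder_of ⟨0, fun n => sum_nonneg fun i _ => sum_nonneg fun j _ => hp i j⟩)
    hcond
  have hwin' : ∀ᶠ n in atTop, ∀ k, α ≤ ∑ j ∈ Icc (n + 1) (σ k n), ∑ i, p i j :=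
    hwin.mono fun n hn k => (hn k).le.trans_eq sum_comm
  refine ⟨fun ⟨N, hN⟩ => hx.not_eventually_pos hp hσ hα hwin' (eventually_atTop.2 ⟨N, hN⟩),
    fun ⟨N, hN⟩ => hx.neg.not_eventually_pos hp hσ hα hwin' (eventually_atTop.2 ⟨N, ?_⟩)⟩
  exact fun n hn => neg_pos.2 (hN n hn)

/-- Theorem 3.4′: if the advances are bounded (`σ_i(n) - n ≤ μ_i` for some `μ_i > 0`)
and for each `k`, `liminf_{n→∞} ∑_{i=1}^m ∑_{j=n+1}^{σ_k(n)} p_i(j) > 1/e`,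
then every solution of the advanced equation oscillates. -/
theorem stmt_12 {m : ℕ} (hm : 0 < m) (p : Fin m → ℕ → ℝ) (σ : Fin m → ℕ → ℕ)
    (hp : ∀ i : Fin m, ∀ n : ℕ, 0 ≤ p i n)
    (hσ : ∀ i : Fin m, ∀ n : ℕ, 1 ≤ n → n + 1 ≤ σ i n)
    (μ : Fin m → ℝ) (hμpos : ∀ i : Fin m, 0 < μ i)
    (hμ : ∀ i : Fin m, ∀ n : ℕ, 1 ≤ n → (σ i n : ℝ) - n ≤ μ i)
    (hcond : ∀ k : Fin m,
      1 / Real.exp 1 <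
        Filter.liminf (fun n : ℕ => ∑ i : Fin m, ∑ j ∈ Finset.Icc (n + 1) (σ k n), p i j)
          Filter.atTop)
    (x : ℕ → ℝ)
    (hxeq : ∀ n : ℕ, 1 ≤ n → x n - x (n - 1) - ∑ i : Fin m, p i n * x (σ i n) = 0) :
    (¬ ∃ N : ℕ, ∀ n ≥ N, 0 < x n) ∧ (¬ ∃ N : ℕ, ∀ n ≥ N, x n < 0) :=
  stmt_12_general hm p σ hp hσ hcond x hxeq
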